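/- arXiv:2105.15008 — 2 statements merged into one kernel-verified Lean document; each statement's English description precedes it below -/
import Mathlib

section
/- Let {X(t): 0 ≤ t ≤ T} be a Brownian motion with drift μ and diffusion coefficient σ > 0 under P, let r ∈ ℝ, and let h* be the real number satisfying μ + h* σ² = r − σ²/2. Then for every event B measurable with respect to σ(X(t): 0 ≤ t ≤ T), the factorization formula holds: E(e^{X(T)} I(B); h*) = e^{rT} · Pr(B; h* + 1), where E(Y; h) := E_P[Y e^{h X(T)}]/E_P[e^{h X(T)}] and Pr(B; h) := E(I(B); h). -/
/-!
Multiplying by `e^{X(T)}` moves the Esscher parameter from `h` to `h + 1`, so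
`E(e^{X(T)} Y; h) = M(h + 1) / M(h) · E(Y; h + 1)` for any `Y`, where `M` is the moment generating
function of `X(T)`. As `X(T) ∼ N(μT, σ²T)`, `log M(h + 1) - log M(h) = (μ + (h + 1/2) σ²) T`,
which is `rT` exactly when `h = h*`.
-/

open MeasureTheory ProbabilityTheory Set

/-- A standard Brownian motion on the time interval `[0, T]`: continuous paths started at `0`,
with Gaussian increments `W t - W s ∼ N(0, t - s)` for `0 ≤ s ≤ t ≤ T` that are independent
over disjoint intervals. -/
structure IsStdBMOn {Ω : Type*} [MeasurableSpace Ω] (P : Measure Ω) (W : ℝ → Ω → ℝ)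
    (T : ℝ) : Prop where
  init : ∀ ω, W 0 ω = 0
  cont : ∀ ω, ContinuousOn (fun t => W t ω) (Set.Icc 0 T)
  meas : ∀ t, Measurable (W t)
  incr : ∀ s t : ℝ, 0 ≤ s → s ≤ t → t ≤ T →
    P.map (fun ω => W t ω - W s ω) = gaussianReal 0 (t - s).toNNReal
  indep : ∀ (k : ℕ) (ts : Fin (k + 1) → ℝ), Monotone ts → 0 ≤ ts 0 → ts (Fin.last k) ≤ T →
    iIndepFun
      (fun i : Fin k => fun ω => W (ts i.succ) ω - W (ts i.castSucc) ω) P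

/-- `X` is a Brownian motion with drift `μ` and diffusion coefficient `σ` on `[0, T]`:
`X t = μ t + σ W t` on `[0, T]` for a standard Brownian motion `W` on `[0, T]`. -/
def IsBMOn {Ω : Type*} [MeasurableSpace Ω] (P : Measure Ω) (X : ℝ → Ω → ℝ)
    (μ σ T : ℝ) : Prop :=
  ∃ W : ℝ → Ω → ℝ, IsStdBMOn P W T ∧ ∀ t ∈ Set.Icc (0 : ℝ) T, ∀ ω, X t ω = μ * t + σ * W t ω


/-- The Esscher expectation `E(Y; h) = E_P[Y e^{h X(T)}] / E_P[e^{h X(T)}]`. -/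
noncomputable def esscherExp {Ω : Type*} [MeasurableSpace Ω] (P : Measure Ω)
    (XT : Ω → ℝ) (h : ℝ) (Y : Ω → ℝ) : ℝ :=
  (∫ ω, Y ω * Real.exp (h * XT ω) ∂P) / ∫ ω, Real.exp (h * XT ω) ∂P

section

variable {Ω : Type*} [MeasurableSpace Ω] {P : Measure Ω}

theorem IsStdBMOn.hasLaw {W : ℝ → Ω → ℝ} {T t : ℝ} (hW : IsStdBMOn P W T) (ht : 0 ≤ t)
    (htT : t ≤ T) : HasLaw (W t) (gaussianReal 0 t.toNNReal) P where
  aemeasurable := (hW.meas t).aemeasurable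
  map_eq := by simpa [hW.init] using hW.incr 0 t le_rfl ht htT

theorem IsBMOn.hasLaw {X : ℝ → Ω → ℝ} {μ σ T t : ℝ} (hX : IsBMOn P X μ σ T) (ht : 0 ≤ t)
    (htT : t ≤ T) : HasLaw (X t) (gaussianReal (μ * t) (σ ^ 2 * t).toNNReal) P := by
  obtain ⟨W, hW, hXW⟩ := hX
  have hXt : X t = fun ω => σ * W t ω + μ * t := funext fun ω => by
    rw [hXW t ⟨ht, htT⟩ ω, add_comm]
  have hvar : NNReal.mk (σ ^ 2) (sq_nonneg σ) * t.toNNReal = (σ ^ 2 * t).toNNReal := by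
    ext
    simp [Real.coe_toNNReal _ ht, Real.coe_toNNReal _ (mul_nonneg (sq_nonneg σ) ht)]
  have h := gaussianReal_add_const (gaussianReal_const_mul (hW.hasLaw ht htT) σ) (μ * t)
  rwa [mul_zero, zero_add, hvar, ← hXt] at h

theorem IsBMOn.mgf_eq {X : ℝ → Ω → ℝ} {μ σ T t : ℝ} (hX : IsBMOn P X μ σ T) (ht : 0 ≤ t)
    (htT : t ≤ T) (h : ℝ) :
    mgf (X t) P h = Real.exp (μ * t * h + σ ^ 2 * t * h ^ 2 / 2) := by
  rw [mgf_gaussianReal (hX.hasLaw ht htT).map_eq,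
    Real.coe_toNNReal _ (mul_nonneg (sq_nonneg σ) ht)]

theorem esscherExp_exp_mul (XT Y : Ω → ℝ) (h : ℝ) (hM : mgf XT P (h + 1) ≠ 0) :
    esscherExp P XT h (fun ω => Real.exp (XT ω) * Y ω) =
      mgf XT P (h + 1) / mgf XT P h * esscherExp P XT (h + 1) Y := by
  have htilt : ∀ ω, Real.exp (XT ω) * Y ω * Real.exp (h * XT ω) =
      Y ω * Real.exp ((h + 1) * XT ω) := fun ω => by
    rw [add_one_mul, Real.exp_add]; ring
  simp only [esscherExp, htilt, ← mgf.eq_1]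
  field_simp

end

theorem esscher_factorization_formula_general
    {Ω : Type*} [MeasurableSpace Ω] (P : Measure Ω)
    (μ σ T r hstar : ℝ) (hT : 0 < T)
    (X : ℝ → Ω → ℝ) (hX : IsBMOn P X μ σ T)
    (hstar_def : μ + hstar * σ ^ 2 = r - σ ^ 2 / 2)
    (B : Set Ω) :
    esscherExp P (X T) hstar (fun ω => Real.exp (X T ω) * B.indicator (fun _ => (1 : ℝ)) ω) =
      Real.exp (r * T) *
        esscherExp P (X T) (hstar + 1) (B.indicator fun _ => (1 : ℝ)) := by
  have hM : mgf (X T) P (hstar + 1) ≠ 0 := by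
    rw [hX.mgf_eq hT.le le_rfl]
    positivity
  rw [esscherExp_exp_mul _ _ _ hM, hX.mgf_eq hT.le le_rfl, hX.mgf_eq hT.le le_rfl,
    ← Real.exp_sub]
  congr 2
  linear_combination T * hstar_def

/-- **Factorization formula.** If `X` is a Brownian motion with drift `μ` and diffusion
`σ > 0` on `[0, T]` under `P`, `h*` satisfies `μ + h* σ² = r - σ²/2`, and `B` is an event
measurable with respect to `σ(X(t) : 0 ≤ t ≤ T)`, then
`E(e^{X(T)} I(B); h*) = e^{rT} Pr(B; h* + 1)`. -/
theorem esscher_factorization_formula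
    {Ω : Type*} [MeasurableSpace Ω] (P : Measure Ω) [IsProbabilityMeasure P]
    (μ σ T r hstar : ℝ) (hσ : 0 < σ) (hT : 0 < T)
    (X : ℝ → Ω → ℝ) (hX : IsBMOn P X μ σ T)
    (hstar_def : μ + hstar * σ ^ 2 = r - σ ^ 2 / 2)
    (B : Set Ω)
    (hB : MeasurableSet[⨆ t ∈ Set.Icc (0 : ℝ) T,
      MeasurableSpace.comap (X t) Real.measurableSpace] B) :
    esscherExp P (X T) hstar (fun ω => Real.exp (X T ω) * B.indicator (fun _ => (1 : ℝ)) ω) =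
      Real.exp (r * T) *
        esscherExp P (X T) (hstar + 1) (B.indicator fun _ => (1 : ℝ)) :=
  esscher_factorization_formula_general P μ σ T r hstar hT X hX hstar_def B
end

section
/- Consider the Black–Scholes model S(t) = S(0) e^{X(t)} where, under the risk-neutral measure, {X(t): 0 ≤ t ≤ T} is a Brownian motion with drift r − σ²/2 and diffusion coefficient σ > 0, with r the interest rate. Fix 0 = t_0 < t_1 < ⋯ < t_n = T, a subset I = {i_1,…,i_g} of {1,…,n}, icicle levels L_1,…,L_n > 0 and barrier levels B_i > 0 for i ∈ I, and set x_i = ln(L_i/S(0)), m_i = ln(B_i/S(0)), k = ln(K/S(0)) for strike K > 0. Let A_d = {X(t_1) ≥ x_1, …, X(t_n) ≥ x_n} ∩ ∩_{i∈I} {m(t_{i-1},t_i) ≥ m_i}, where m(s,t) is the minimum of X over [s,t]. Assume m_{min(I)} ≤ 0 and x_{i-1} ≥ m_i, x_i ≥ m_i for every i ∈ I. Then the down-and-out icicled multi-step barrier call price satisfies e^{−rT} E[(S(T) − K)⁺ I(A_d)] = S(0) PA_u(−r − σ²/2; −x_1,…,−x_{n-1}, min(−x_n, −k); −m_{i_1},…,−m_{i_g})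 − K e^{−rT} PA_u(−r + σ²/2; −x_1,…,−x_{n-1}, min(−x_n, −k); −m_{i_1},…,−m_{i_g}). -/
/-!
Reflection `Z = -X` turns the down-and-out event intersected with `{X(T) ≥ k}` into the
up-and-out event of `PA_u` for `Z`, a Brownian motion with drift `-r + σ²/2`, at the levels
`-x₁, …, -x_{n-1}, min(-xₙ, -k)` and `-mᵢ`; this gives the strike term. For the stock term,
`e^{-rT} S(T) = S(0) exp(-rT + X(T))`, and reweighting `P` by the probability density
`exp(-rT + X(T))` makes `Z` a Brownian motion with drift `-r - σ²/2` (Girsanov: at finitely many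
times the density factors into exponential tilts of the independent Gaussian increments).
Both changes of law only involve countably many times: by path continuity each running maximum is
a supremum over rational times, and a law on `ι → ℝ` is determined by its finite-dimensional
marginals.
-/

open MeasureTheory ProbabilityTheory Set

/-- A standard Brownian motion on `[0, ∞)`: continuous paths started at `0`, with
Gaussian increments `W t - W s ∼ N(0, t - s)` that are independent over disjoint intervals. -/
structure IsStdBM {Ω : Type*} [MeasurableSpace Ω] (P : Measure Ω) (W : ℝ → Ω → ℝ) : Prop where
  init : ∀ ω, W 0 ω = 0
  cont : ∀ ω, Continuous fun t => W t ω
  meas : ∀ t, Measurable (W t)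
  incr : ∀ s t : ℝ, 0 ≤ s → s ≤ t →
    P.map (fun ω => W t ω - W s ω) = gaussianReal 0 (t - s).toNNReal
  indep : ∀ (k : ℕ) (ts : Fin (k + 1) → ℝ), Monotone ts → 0 ≤ ts 0 →
    iIndepFun
      (fun i : Fin k => fun ω => W (ts i.succ) ω - W (ts i.castSucc) ω) P

/-- `X` is a Brownian motion with drift `μ` and diffusion coefficient `σ`:
`X t = μ t + σ W t` for a standard Brownian motion `W`. -/
def IsBM {Ω : Type*} [MeasurableSpace Ω] (P : Measure Ω) (X : ℝ → Ω → ℝ) (μ σ : ℝ) : Prop :=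
  ∃ W : ℝ → Ω → ℝ, IsStdBM P W ∧ ∀ t ω, X t ω = μ * t + σ * W t ω

/-- The running maximum `M(s,t) = max {X τ : s ≤ τ ≤ t}`. -/
noncomputable def runMax {Ω : Type*} (X : ℝ → Ω → ℝ) (s t : ℝ) (ω : Ω) : ℝ :=
  sSup ((fun τ => X τ ω) '' Set.Icc s t)

/-- The sequence `m[i]`: `m[0] = 0`, `m[i] = m i - m[i-1]` if `i ∈ J`, else `m[i-1]`. -/
noncomputable def mseq (J : Finset ℕ) (m : ℕ → ℝ) : ℕ → ℝ
  | 0 => 0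
  | i + 1 => if i + 1 ∈ J then m (i + 1) - mseq J m i else mseq J m i

/-- The sign `s_i`: `1` if the number of elements of `J` greater than `i` is even, else `-1`. -/
noncomputable def ssign (J : Finset ℕ) (i : ℕ) : ℝ :=
  if Even (J.filter (fun k => i < k)).card then 1 else -1

/-- `PA_u(X; x; m) = Pr(X(t₁) ≤ x₁, …, X(tₙ) ≤ xₙ, ∩_{i∈I} {M(t_{i-1},t_i) ≤ m_i})`,
the multi-step barrier probability for the process `X`. -/
noncomputable def PAu {Ω : Type*} [MeasurableSpace Ω] (P : Measure Ω) (X : ℝ → Ω → ℝ)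
    (t : ℕ → ℝ) (n : ℕ) (I : Finset ℕ) (x m : ℕ → ℝ) : ℝ :=
  (P {ω | (∀ i ∈ Finset.Icc 1 n, X (t i) ω ≤ x i) ∧
      ∀ i ∈ I, runMax X (t (i - 1)) (t i) ω ≤ m i}).toReal

/-- The running minimum `m(s,t) = min {X τ : s ≤ τ ≤ t}`. -/
noncomputable def runMin {Ω : Type*} (X : ℝ → Ω → ℝ) (s t : ℝ) (ω : Ω) : ℝ :=
  sInf ((fun τ => X τ ω) '' Set.Icc s t)

open scoped NNReal ENNReal

section Gaussian

open Real

lemma gaussianPDFReal_mul_exp (m : ℝ) {V : ℝ≥0} (hV : V ≠ 0) (x : ℝ) :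
    gaussianPDFReal m V x * exp (m - V / 2 - x) = gaussianPDFReal (m - V) V x := by
  have hV' : (V : ℝ) ≠ 0 := NNReal.coe_ne_zero.mpr hV
  rw [gaussianPDFReal, gaussianPDFReal, mul_assoc, ← exp_add]
  congr 2
  field_simp
  ring

lemma gaussianReal_withDensity_exp (m : ℝ) (V : ℝ≥0) :
    (gaussianReal m V).withDensity (fun x => ENNReal.ofReal (exp (m - V / 2 - x)))
      = gaussianReal (m - V) V := by
  rcases eq_or_ne V 0 with rfl | hV
  · simp [gaussianReal_zero_var, dirac_withDensity]
  · rw [gaussianReal_of_var_ne_zero _ hV, gaussianReal_of_var_ne_zero _ hV,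
      ← withDensity_mul _ (measurable_gaussianPDF _ _) (by fun_prop)]
    congr 1
    funext x
    rw [Pi.mul_apply, gaussianPDF, gaussianPDF, ← ENNReal.ofReal_mul (gaussianPDFReal_nonneg _ _ _),
      gaussianPDFReal_mul_exp m hV]

lemma gaussianReal_map_affine (a c : ℝ) {v : ℝ} (hv : 0 ≤ v) :
    (gaussianReal 0 v.toNNReal).map (fun x => a + c * x) = gaussianReal a (c ^ 2 * v).toNNReal := by
  have hcomp : (fun x : ℝ => a + c * x) = (fun x => a + x) ∘ fun x => c * x := rfl
  rw [hcomp, ← Measure.map_map (measurable_const_add a) (measurable_const_mul c),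
    gaussianReal_map_const_mul, gaussianReal_map_const_add, mul_zero, zero_add]
  congr 1
  ext
  simp [hv, Real.coe_toNNReal _ (mul_nonneg (sq_nonneg c) hv)]

end Gaussian

section PiProduct

variable {ι : Type*} [Fintype ι] {α : ι → Type*} [∀ i, MeasurableSpace (α i)]
  {μ : ∀ i, Measure (α i)} [∀ i, IsProbabilityMeasure (μ i)]

lemma lintegral_pi_prod {f : ∀ i, α i → ℝ≥0∞} (hf : ∀ i, Measurable (f i)) :
    ∫⁻ v, ∏ i, f i (v i) ∂Measure.pi μ = ∏ i, ∫⁻ x, f i x ∂μ i := by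
  rw [lintegral_prod_eq_prod_lintegral_of_indepFun _ _ (iIndepFun_pi fun i => (hf i).aemeasurable)
    fun i => (hf i).comp (measurable_pi_apply i)]
  exact Finset.prod_congr rfl fun i _ =>
    (measurePreserving_eval μ i).lintegral_comp (hf i)

lemma Measure.pi_withDensity_prod {f : ∀ i, α i → ℝ≥0∞} (hf : ∀ i, Measurable (f i))
    [∀ i, SigmaFinite ((μ i).withDensity (f i))] :
    (Measure.pi μ).withDensity (fun v => ∏ i, f i (v i))
      = Measure.pi fun i => (μ i).withDensity (f i) := by
  refine (Measure.pi_eq fun s hs => ?_).symm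
  have hind : (univ.pi s).indicator (fun v => ∏ i, f i (v i))
      = fun v => ∏ i, (s i).indicator (f i) (v i) := by
    funext v
    by_cases h : v ∈ univ.pi s
    · rw [indicator_of_mem h]
      exact Finset.prod_congr rfl fun i _ => (indicator_of_mem (h i (mem_univ i)) _).symm
    · obtain ⟨i, -, hi⟩ := not_forall₂.mp h
      rw [indicator_of_notMem h]
      exact (Finset.prod_eq_zero (Finset.mem_univ i) (indicator_of_notMem hi _)).symm
  rw [withDensity_apply _ (.univ_pi hs), ← lintegral_indicator (.univ_pi hs), hind,
    lintegral_pi_prod fun i => (hf i).indicator (hs i)]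
  exact Finset.prod_congr rfl fun i _ => by
    rw [lintegral_indicator (hs i), withDensity_apply _ (hs i)]

end PiProduct

section MeasureMap

variable {Ω β : Type*} [MeasurableSpace Ω] [MeasurableSpace β]

lemma Measure.map_withDensity_comp {μ : Measure Ω} {f : Ω → β} (hf : Measurable f)
    {g : β → ℝ≥0∞} (hg : Measurable g) :
    (μ.withDensity (g ∘ f)).map f = (μ.map f).withDensity g := by
  ext s hs
  rw [Measure.map_apply hf hs, withDensity_apply _ (hf hs), withDensity_apply _ hs,
    setLIntegral_map hs hg hf, Function.comp_def]

lemma Measure.map_eq_of_forall_finset {ι : Type*} {μ μ' : Measure Ω} [IsFiniteMeasure μ']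
    {F F' : Ω → ι → β} (hF : Measurable F) (hF' : Measurable F')
    (h : ∀ J : Finset ι, μ.map (fun ω (j : J) => F ω j) = μ'.map (fun ω (j : J) => F' ω j)) :
    μ.map F = μ'.map F' :=
  IsProjectiveLimit.unique (P := fun J => μ'.map fun ω (j : J) => F' ω j)
    (fun J => by rw [Measure.map_map J.measurable_restrict hF]; exact h J)
    (fun J => by rw [Measure.map_map J.measurable_restrict hF']; rfl)

lemma measurableSet_forall_le {ι : Type*} [Countable ι] (c : ι → ℝ) :
    MeasurableSet {f : ι → ℝ | ∀ j, f j ≤ c j} := by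
  simp only [ofPred_forall]
  exact .iInter fun j => measurableSet_le (measurable_pi_apply j) measurable_const

end MeasureMap

section PartialSum

lemma Fin.partialSum_sub {M : ℕ} {G : Type*} [AddCommGroup G] (g : Fin (M + 1) → G)
    (i : Fin (M + 1)) :
    Fin.partialSum (fun l : Fin M => g l.succ - g l.castSucc) i = g i - g 0 := by
  induction i using Fin.induction with
  | zero => simp
  | succ i ih => rw [Fin.partialSum_succ, ih]; abel

lemma Fin.partialSum_last {M : ℕ} {G : Type*} [AddCommMonoid G] (f : Fin M → G) :
    Fin.partialSum f (Fin.last M) = ∑ i, f i := by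
  rw [Fin.partialSum, Fin.val_last, List.take_of_length_le (List.length_ofFn).le, List.sum_ofFn]

lemma measurable_partialSum {M : ℕ} (i : Fin (M + 1)) :
    Measurable fun v : Fin M → ℝ => Fin.partialSum v i := by
  induction i using Fin.induction with
  | zero => simp [measurable_const]
  | succ i ih =>
    simp only [Fin.partialSum_succ]
    exact ih.add (measurable_pi_apply i)

end PartialSum

lemma exists_fin_grid {ι : Type*} [Fintype ι] (τ : ι → ℝ) {T : ℝ} (hT : 0 ≤ T)
    (hτ0 : ∀ j, 0 ≤ τ j) (hτT : ∀ j, τ j ≤ T) :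
    ∃ (M : ℕ) (ts : Fin (M + 1) → ℝ) (idx : ι → Fin (M + 1)), Monotone ts ∧ ts 0 = 0 ∧
      ts (Fin.last M) = T ∧ ∀ j, ts (idx j) = τ j := by
  classical
  set F : Finset ℝ := insert 0 (insert T (Finset.univ.image τ))
  have hF : ∀ x ∈ F, 0 ≤ x ∧ x ≤ T := by
    simp only [F, Finset.mem_insert, Finset.mem_image, Finset.mem_univ, true_and]
    rintro x (rfl | rfl | ⟨j, rfl⟩)
    exacts [⟨le_rfl, hT⟩, ⟨hT, le_rfl⟩, ⟨hτ0 j, hτT j⟩]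
  obtain ⟨M, hM⟩ : ∃ M, F.card = M + 1 :=
    Nat.exists_eq_add_one.mpr (Finset.card_pos.mpr ⟨0, Finset.mem_insert_self _ _⟩)
  set e := F.orderIsoOfFin hM
  have hpre : ∀ x (hx : x ∈ F), (e (e.symm ⟨x, hx⟩) : ℝ) = x := fun x hx => by
    rw [e.apply_symm_apply]
  have hmono : Monotone fun i => (e i : ℝ) := fun a b hab => e.monotone hab
  refine ⟨M, fun i => e i, fun j => e.symm ⟨τ j, by simp [F]⟩, hmono, ?_, ?_, fun j => hpre _ _⟩
  · refine le_antisymm ?_ (hF _ (e 0).2).1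
    rw [← hpre 0 (by simp [F])]
    exact hmono (Fin.zero_le _)
  · refine le_antisymm (hF _ (e _).2).2 ?_
    rw [← hpre T (by simp [F])]
    exact hmono (Fin.le_last _)

section Paths

variable {Ω : Type*}

lemma Icc_subset_closure_Ioo_inter_range_ratCast {a b : ℝ} (hab : a < b) :
    Icc a b ⊆ closure (Ioo a b ∩ range ((↑) : ℚ → ℝ)) := by
  rw [← closure_Ioo hab.ne]
  exact closure_minimal (Rat.denseRange_cast.open_subset_closure_inter isOpen_Ioo) isClosed_closure

variable {X : ℝ → Ω → ℝ} {ω : Ω}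

lemma runMax_le_iff (hX : Continuous fun τ => X τ ω) {a b : ℝ} (hab : a < b) (c : ℝ) :
    runMax X a b ω ≤ c ↔ ∀ τ ∈ Ioo a b ∩ range ((↑) : ℚ → ℝ), X τ ω ≤ c := by
  rw [runMax, csSup_le_iff ((isCompact_Icc.image hX).bddAbove) ((nonempty_Icc.mpr hab.le).image _),
    forall_mem_image]
  refine ⟨fun h τ hτ => h (Ioo_subset_Icc_self hτ.1), fun h τ hτ => ?_⟩
  exact closure_minimal h (isClosed_le hX continuous_const)
    (Icc_subset_closure_Ioo_inter_range_ratCast hab hτ)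

lemma le_runMin_iff (a b c : ℝ) :
    c ≤ runMin X a b ω ↔ runMax (fun τ ω => -X τ ω) a b ω ≤ -c := by
  rw [runMin, runMax, Real.sInf_def, le_neg, ← image_neg_eq_neg, image_image]

lemma forall_le_update_min_iff {s : Finset ℕ} {n : ℕ} (hn : n ∈ s) (f v : ℕ → ℝ) (c : ℝ) :
    (∀ i ∈ s, v i ≤ Function.update f n (min (f n) c) i) ↔ (∀ i ∈ s, v i ≤ f i) ∧ v n ≤ c := by
  refine ⟨fun h => ⟨fun i hi => ?_, ?_⟩, fun ⟨hf, hc⟩ i hi => ?_⟩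
  · rcases eq_or_ne i n with rfl | hin
    · simpa using (le_min_iff.mp (by simpa using h i hi)).1
    · simpa [hin] using h i hi
  · exact (le_min_iff.mp (by simpa using h n hn)).2
  · rcases eq_or_ne i n with rfl | hin
    · simpa using le_min (hf i hi) hc
    · simpa [hin] using hf i hi

def constraintEvent (X : ℝ → Ω → ℝ) (C : Set (ℝ × ℝ)) : Set Ω :=
  {ω | ∀ p ∈ C, X p.1 ω ≤ p.2}

lemma constraintEvent_eq_preimage (C : Set (ℝ × ℝ)) :
    constraintEvent X C = (fun ω (p : C) => X p.1.1 ω) ⁻¹' {f | ∀ p : C, f p ≤ p.1.2} := by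
  ext ω
  simp [constraintEvent]

def barrierConstraints (t : ℕ → ℝ) (n : ℕ) (I : Finset ℕ) (x m : ℕ → ℝ) : Set (ℝ × ℝ) :=
  (fun i => (t i, x i)) '' ↑(Finset.Icc 1 n) ∪
    ⋃ i ∈ I, (fun τ => (τ, m i)) '' (Ioo (t (i - 1)) (t i) ∩ range ((↑) : ℚ → ℝ))

def barrierEvent (V : ℝ → Ω → ℝ) (t : ℕ → ℝ) (n : ℕ) (I : Finset ℕ) (x m : ℕ → ℝ) : Set Ω :=
  {ω | (∀ i ∈ Finset.Icc 1 n, V (t i) ω ≤ x i) ∧ ∀ i ∈ I, runMax V (t (i - 1)) (t i) ω ≤ m i}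

variable {t : ℕ → ℝ} {n : ℕ} {I : Finset ℕ}

lemma barrierConstraints_countable (t : ℕ → ℝ) (n : ℕ) (I : Finset ℕ) (x m : ℕ → ℝ) :
    (barrierConstraints t n I x m).Countable :=
  ((Finset.Icc 1 n).countable_toSet.image _).union <| I.countable_toSet.biUnion fun _ _ =>
    ((countable_range _).mono inter_subset_right).image _

lemma StrictMonoOn.apply_sub_one_lt {β : Type*} [Preorder β] {f : ℕ → β}
    (hf : StrictMonoOn f (Iic n)) {i : ℕ} (hi : i ∈ Finset.Icc 1 n) : f (i - 1) < f i := by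
  have := Finset.mem_Icc.mp hi
  exact hf (mem_Iic.mpr (by omega)) (mem_Iic.mpr this.2) (by omega)

lemma StrictMonoOn.apply_mem_Icc (ht : StrictMonoOn t (Iic n)) (ht0 : t 0 = 0) {i : ℕ}
    (hi : i ≤ n) : t i ∈ Icc 0 (t n) :=
  ⟨ht0 ▸ ht.monotoneOn (mem_Iic.mpr (Nat.zero_le _)) (mem_Iic.mpr hi) (Nat.zero_le _),
    ht.monotoneOn (mem_Iic.mpr hi) (mem_Iic.mpr le_rfl) hi⟩

lemma barrierConstraints_fst_mem (ht0 : t 0 = 0) (ht : StrictMonoOn t (Iic n))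
    (hI : I ⊆ Finset.Icc 1 n) (x m : ℕ → ℝ) :
    ∀ p ∈ barrierConstraints t n I x m, p.1 ∈ Icc 0 (t n) := by
  have hbound : ∀ i ≤ n, t i ∈ Icc 0 (t n) := fun i hi => ht.apply_mem_Icc ht0 hi
  rintro p (⟨i, hi, rfl⟩ | hp)
  · exact hbound i (Finset.mem_Icc.mp hi).2
  · simp only [mem_iUnion, mem_image] at hp
    obtain ⟨i, hiI, τ, hτ, rfl⟩ := hp
    have hi := Finset.mem_Icc.mp (hI hiI)
    exact ⟨(hbound (i - 1) (by omega)).1.trans hτ.1.1.le, hτ.1.2.le.trans (hbound i hi.2).2⟩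

lemma barrierEvent_eq_constraintEvent {V : ℝ → Ω → ℝ} (hV : ∀ ω, Continuous fun τ => V τ ω)
    (ht : StrictMonoOn t (Iic n)) (hI : I ⊆ Finset.Icc 1 n) (x m : ℕ → ℝ) :
    barrierEvent V t n I x m = constraintEvent V (barrierConstraints t n I x m) := by
  ext ω
  have hmax : ∀ i ∈ I, runMax V (t (i - 1)) (t i) ω ≤ m i ↔
      ∀ τ ∈ Ioo (t (i - 1)) (t i) ∩ range ((↑) : ℚ → ℝ), V τ ω ≤ m i :=
    fun i hi => runMax_le_iff (hV ω) (ht.apply_sub_one_lt (hI hi)) _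
  constructor
  · rintro ⟨hx, hm⟩ p (⟨i, hi, rfl⟩ | hp)
    · exact hx i hi
    · obtain ⟨i, hiI, τ, hτ, rfl⟩ := mem_iUnion₂.mp hp
      exact (hmax i hiI).mp (hm i hiI) τ hτ
  · intro h
    refine ⟨fun i hi => h _ (Or.inl ⟨i, hi, rfl⟩), fun i hi => (hmax i hi).mpr fun τ hτ => ?_⟩
    exact h _ (Or.inr (mem_biUnion hi ⟨τ, hτ, rfl⟩))

lemma downEvent_inter_eq_barrierEvent_neg (hn : 0 < n) (x m : ℕ → ℝ) (k : ℝ) :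
    {ω | (∀ i ∈ Finset.Icc 1 n, x i ≤ X (t i) ω) ∧ ∀ i ∈ I, m i ≤ runMin X (t (i - 1)) (t i) ω} ∩
        {ω | k ≤ X (t n) ω}
      = barrierEvent (fun τ ω => -X τ ω) t n I
          (Function.update (fun i => -x i) n (min (-x n) (-k))) fun i => -m i := by
  ext ω
  simp only [barrierEvent, mem_inter_iff, mem_ofPred_eq, le_runMin_iff,
    forall_le_update_min_iff (Finset.mem_Icc.mpr ⟨hn, le_rfl⟩) (fun i => -x i)
      (fun i => -X (t i) ω), neg_le_neg_iff]
  tauto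

end Paths

section BrownianMotion

variable {Ω : Type*} [MeasurableSpace Ω] {P : Measure Ω}

lemma IsStdBM.neg {W : ℝ → Ω → ℝ} (h : IsStdBM P W) : IsStdBM P (fun t ω => -W t ω) where
  init ω := by simp [h.init ω]
  cont ω := (h.cont ω).neg
  meas t := (h.meas t).neg
  incr s t hs hst := by
    have hcomp : (fun ω => -W t ω - -W s ω) = (fun x => -x) ∘ fun ω => W t ω - W s ω := by
      funext ω; simp only [Function.comp_apply]; ring
    rw [hcomp, ← Measure.map_map (g := fun x => -x) (f := fun ω => W t ω - W s ω) measurable_neg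
      ((h.meas t).sub (h.meas s)), h.incr s t hs hst, gaussianReal_map_neg, neg_zero]
  indep k ts hts h0 := by
    convert (h.indep k ts hts h0).comp (fun _ x => -x) fun _ => measurable_neg using 1
    funext i ω
    simp only [Function.comp_apply]
    ring

lemma PAu_eq_measureReal_barrierEvent (V : ℝ → Ω → ℝ) (t : ℕ → ℝ) (n : ℕ) (I : Finset ℕ)
    (x m : ℕ → ℝ) : PAu P V t n I x m = P.real (barrierEvent V t n I x m) :=
  rfl

def increments (Z : ℝ → Ω → ℝ) {M : ℕ} (ts : Fin (M + 1) → ℝ) (ω : Ω) (i : Fin M) : ℝ :=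
  Z (ts i.succ) ω - Z (ts i.castSucc) ω

namespace IsBM

variable {Z Z' : ℝ → Ω → ℝ} {ν σ : ℝ}

lemma measurable (h : IsBM P Z ν σ) (τ : ℝ) : Measurable (Z τ) := by
  obtain ⟨W, hW, hZ⟩ := h
  rw [funext (hZ τ)]
  exact measurable_const.add ((hW.meas τ).const_mul σ)

lemma continuous (h : IsBM P Z ν σ) (ω : Ω) : Continuous fun τ => Z τ ω := by
  obtain ⟨W, hW, hZ⟩ := h
  simp only [hZ]
  exact (continuous_const.mul continuous_id).add (continuous_const.mul (hW.cont ω))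

lemma zero (h : IsBM P Z ν σ) (ω : Ω) : Z 0 ω = 0 := by
  obtain ⟨W, hW, hZ⟩ := h
  rw [hZ 0 ω, hW.init ω]; ring

lemma neg (h : IsBM P Z ν σ) : IsBM P (fun t ω => -Z t ω) (-ν) σ := by
  obtain ⟨W, hW, hZ⟩ := h
  exact ⟨fun t ω => -W t ω, hW.neg, fun t ω => by simp only [hZ]; ring⟩

lemma measurable_eval (h : IsBM P Z ν σ) {ι : Type*} (τ : ι → ℝ) :
    Measurable fun ω j => Z (τ j) ω :=
  measurable_pi_lambda _ fun _ => h.measurable _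

lemma measurableSet_constraintEvent (h : IsBM P Z ν σ) {C : Set (ℝ × ℝ)} (hC : C.Countable) :
    MeasurableSet (constraintEvent Z C) := by
  simp only [constraintEvent, ofPred_forall]
  exact .biInter hC fun p _ => measurableSet_le (h.measurable p.1) measurable_const

lemma measurableSet_barrierEvent (h : IsBM P Z ν σ) {t : ℕ → ℝ} {n : ℕ} {I : Finset ℕ}
    (ht : StrictMonoOn t (Iic n)) (hI : I ⊆ Finset.Icc 1 n) (x m : ℕ → ℝ) :
    MeasurableSet (barrierEvent Z t n I x m) := by
  rw [barrierEvent_eq_constraintEvent h.continuous ht hI]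
  exact h.measurableSet_constraintEvent (barrierConstraints_countable t n I x m)

section Grid

variable {M : ℕ} {ts : Fin (M + 1) → ℝ}

lemma measurable_increments (h : IsBM P Z ν σ) : Measurable (increments Z ts) :=
  measurable_pi_lambda _ fun _ => (h.measurable _).sub (h.measurable _)

lemma eq_partialSum (h : IsBM P Z ν σ) (h0 : ts 0 = 0) (ω : Ω) (i : Fin (M + 1)) :
    Z (ts i) ω = Fin.partialSum (increments Z ts ω) i := by
  show _ = Fin.partialSum (fun l => Z (ts l.succ) ω - Z (ts l.castSucc) ω) i
  rw [Fin.partialSum_sub (fun i => Z (ts i) ω), h0, h.zero, sub_zero]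

lemma eval_eq_comp_increments (h : IsBM P Z ν σ) (h0 : ts 0 = 0) {ι : Type*} {τ : ι → ℝ}
    {idx : ι → Fin (M + 1)} (hidx : ∀ j, ts (idx j) = τ j) :
    (fun ω j => Z (τ j) ω) = (fun v j => Fin.partialSum v (idx j)) ∘ increments Z ts := by
  funext ω j
  rw [Function.comp_apply, ← h.eq_partialSum h0, hidx]

lemma map_increments [IsProbabilityMeasure P] (h : IsBM P Z ν σ) (hmono : Monotone ts)
    (h0 : ts 0 = 0) :
    P.map (increments Z ts) = Measure.pi fun i => gaussianReal (ν * (ts i.succ - ts i.castSucc))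
      (σ ^ 2 * (ts i.succ - ts i.castSucc)).toNNReal := by
  obtain ⟨W, hW, hZ⟩ := h
  have hW_meas : ∀ i : Fin M, Measurable (increments W ts · i) :=
    fun i => (hW.meas _).sub (hW.meas _)
  have haffine : ∀ i : Fin M, (increments Z ts · i)
      = (fun x => ν * (ts i.succ - ts i.castSucc) + σ * x) ∘ (increments W ts · i) := by
    intro i; funext ω; simp only [increments, Function.comp_apply, hZ]; ring
  have hind : iIndepFun (fun i => (increments Z ts · i)) P := by
    rw [funext haffine]
    exact (hW.indep M ts hmono h0.ge).comp _ fun i => by fun_prop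
  rw [show increments Z ts = fun ω i => increments Z ts ω i from rfl,
    hind.map_fun_eq_pi_map fun i =>
      (haffine i ▸ (by fun_prop : Measurable _).comp (hW_meas i)).aemeasurable]
  congr 1 with i : 1
  rw [haffine, ← Measure.map_map (by fun_prop) (hW_meas i)]
  simp only [increments]
  rw [hW.incr _ _ (h0 ▸ hmono (Fin.zero_le _)) (hmono (Fin.castSucc_le_succ _)),
    gaussianReal_map_affine _ _ (sub_nonneg.mpr (hmono (Fin.castSucc_le_succ i)))]

end Grid

variable [IsProbabilityMeasure P] {ι : Type*}

lemma map_eval_eq_of_fintype [Fintype ι] (hZ : IsBM P Z ν σ) (hZ' : IsBM P Z' ν σ)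
    (τ : ι → ℝ) (hτ : ∀ j, 0 ≤ τ j) :
    P.map (fun ω j => Z (τ j) ω) = P.map (fun ω j => Z' (τ j) ω) := by
  obtain ⟨M, ts, idx, hmono, h0, -, hidx⟩ := exists_fin_grid τ (Finset.sum_nonneg fun j _ => hτ j)
    hτ fun j => Finset.single_le_sum (fun j _ => hτ j) (Finset.mem_univ j)
  have hG : Measurable fun (v : Fin M → ℝ) j => Fin.partialSum v (idx j) :=
    measurable_pi_lambda _ fun j => measurable_partialSum _
  rw [hZ.eval_eq_comp_increments h0 hidx, hZ'.eval_eq_comp_increments h0 hidx,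
    ← Measure.map_map hG hZ.measurable_increments, ← Measure.map_map hG hZ'.measurable_increments,
    hZ.map_increments hmono h0, hZ'.map_increments hmono h0]

lemma map_eval_withDensity_of_fintype [Fintype ι] (hZ : IsBM P Z ν σ)
    (hZ' : IsBM P Z' (ν - σ ^ 2) σ) {T : ℝ} (hT : 0 ≤ T) (τ : ι → ℝ) (hτ0 : ∀ j, 0 ≤ τ j)
    (hτT : ∀ j, τ j ≤ T) :
    (P.withDensity fun ω => ENNReal.ofReal (Real.exp ((ν - σ ^ 2 / 2) * T - Z T ω))).map
      (fun ω j => Z (τ j) ω) = P.map (fun ω j => Z' (τ j) ω) := by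
  obtain ⟨M, ts, idx, hmono, h0, hlast, hidx⟩ := exists_fin_grid τ hT hτ0 hτT
  set Δ : Fin M → ℝ := fun i => ts i.succ - ts i.castSucc
  have hV : ∀ i, ((σ ^ 2 * Δ i).toNNReal : ℝ) = σ ^ 2 * Δ i := fun i =>
    Real.coe_toNNReal _ (mul_nonneg (sq_nonneg σ) (sub_nonneg.mpr (hmono (Fin.castSucc_le_succ i))))
  set f : Fin M → ℝ → ℝ≥0∞ := fun i x => ENNReal.ofReal
    (Real.exp (ν * Δ i - (σ ^ 2 * Δ i).toNNReal / 2 - x))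
  have hf : ∀ i, Measurable (f i) := fun i => by fun_prop
  have hdensity : (fun ω => ENNReal.ofReal (Real.exp ((ν - σ ^ 2 / 2) * T - Z T ω)))
      = (fun v => ∏ i, f i (v i)) ∘ increments Z ts := by
    funext ω
    have hT_sum : T = ∑ i, Δ i := by
      rw [← Fin.partialSum_last, Fin.partialSum_sub, hlast, h0, sub_zero]
    have hZT : Z T ω = ∑ i, increments Z ts ω i := by
      rw [← Fin.partialSum_last, ← hZ.eq_partialSum h0, hlast]
    simp only [Function.comp_apply, f]
    rw [← ENNReal.ofReal_prod_of_nonneg fun i _ => (Real.exp_pos _).le,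
      ← Real.exp_sum, hZT, hT_sum, Finset.mul_sum, ← Finset.sum_sub_distrib]
    congr 2
    refine Finset.sum_congr rfl fun i _ => ?_
    rw [hV]
    ring
  have hG : Measurable fun (v : Fin M → ℝ) j => Fin.partialSum v (idx j) :=
    measurable_pi_lambda _ fun j => measurable_partialSum _
  have : ∀ i, SigmaFinite ((gaussianReal (ν * Δ i) (σ ^ 2 * Δ i).toNNReal).withDensity (f i)) :=
    fun i => by rw [gaussianReal_withDensity_exp]; infer_instance
  rw [hZ.eval_eq_comp_increments h0 hidx, hZ'.eval_eq_comp_increments h0 hidx,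
    ← Measure.map_map hG hZ.measurable_increments, ← Measure.map_map hG hZ'.measurable_increments,
    hdensity, Measure.map_withDensity_comp (g := fun v => ∏ i, f i (v i))
      hZ.measurable_increments (Finset.measurable_prod _ fun i _ => by fun_prop),
    hZ.map_increments hmono h0, hZ'.map_increments hmono h0, Measure.pi_withDensity_prod hf]
  congr 2 with i : 1
  refine (gaussianReal_withDensity_exp _ _).trans ?_
  rw [hV]
  congr 1
  ring

lemma map_eval_eq (hZ : IsBM P Z ν σ) (hZ' : IsBM P Z' ν σ) (τ : ι → ℝ) (hτ : ∀ j, 0 ≤ τ j) :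
    P.map (fun ω j => Z (τ j) ω) = P.map (fun ω j => Z' (τ j) ω) :=
  Measure.map_eq_of_forall_finset (hZ.measurable_eval τ) (hZ'.measurable_eval τ) fun J =>
    hZ.map_eval_eq_of_fintype hZ' (fun j : J => τ j) fun j => hτ j

lemma map_eval_withDensity (hZ : IsBM P Z ν σ) (hZ' : IsBM P Z' (ν - σ ^ 2) σ) {T : ℝ}
    (hT : 0 ≤ T) (τ : ι → ℝ) (hτ0 : ∀ j, 0 ≤ τ j) (hτT : ∀ j, τ j ≤ T) :
    (P.withDensity fun ω => ENNReal.ofReal (Real.exp ((ν - σ ^ 2 / 2) * T - Z T ω))).map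
      (fun ω j => Z (τ j) ω) = P.map (fun ω j => Z' (τ j) ω) :=
  Measure.map_eq_of_forall_finset (hZ.measurable_eval τ) (hZ'.measurable_eval τ) fun J =>
    hZ.map_eval_withDensity_of_fintype hZ' hT (fun j : J => τ j) (fun j => hτ0 j) fun j => hτT j

lemma isProbabilityMeasure_withDensity (hZ : IsBM P Z ν σ) {T : ℝ} (hT : 0 ≤ T) :
    IsProbabilityMeasure
      (P.withDensity fun ω => ENNReal.ofReal (Real.exp ((ν - σ ^ 2 / 2) * T - Z T ω))) := by
  obtain ⟨W, hW, hZW⟩ := id hZ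
  have hZ' : IsBM P (fun t ω => (ν - σ ^ 2) * t + σ * W t ω) (ν - σ ^ 2) σ :=
    ⟨W, hW, fun _ _ => rfl⟩
  -- the marginal on the empty family of times records the total mass
  have h := congrArg (· univ) (hZ.map_eval_withDensity_of_fintype hZ' hT (ι := Empty)
    Empty.elim (fun j => j.elim) fun j => j.elim)
  simp only [Measure.map_apply (hZ.measurable_eval _) .univ,
    Measure.map_apply (hZ'.measurable_eval _) .univ, preimage_univ, measure_univ] at h
  exact ⟨h⟩

lemma integrable_exp (hZ : IsBM P Z ν σ) {T : ℝ} (hT : 0 ≤ T) :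
    Integrable (fun ω => Real.exp ((ν - σ ^ 2 / 2) * T - Z T ω)) P := by
  have := hZ.isProbabilityMeasure_withDensity hT
  have hint := integrable_toReal_of_lintegral_ne_top (μ := P)
    (f := fun ω => ENNReal.ofReal (Real.exp ((ν - σ ^ 2 / 2) * T - Z T ω)))
    (by have := hZ.measurable T; fun_prop)
    (by rw [← setLIntegral_univ, ← withDensity_apply _ .univ]; exact measure_ne_top _ _)
  simpa [ENNReal.toReal_ofReal (Real.exp_pos _).le] using hint

lemma measure_constraintEvent_eq (hZ : IsBM P Z ν σ) (hZ' : IsBM P Z' ν σ) {C : Set (ℝ × ℝ)}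
    (hC : C.Countable) (hC0 : ∀ p ∈ C, 0 ≤ p.1) :
    P (constraintEvent Z C) = P (constraintEvent Z' C) := by
  have := hC.to_subtype
  rw [constraintEvent_eq_preimage, constraintEvent_eq_preimage,
    ← Measure.map_apply (hZ.measurable_eval _) (measurableSet_forall_le _),
    ← Measure.map_apply (hZ'.measurable_eval _) (measurableSet_forall_le _),
    hZ.map_eval_eq hZ' _ fun p : C => hC0 p.1 p.2]

lemma withDensity_constraintEvent_eq (hZ : IsBM P Z ν σ) (hZ' : IsBM P Z' (ν - σ ^ 2) σ)
    {T : ℝ} (hT : 0 ≤ T) {C : Set (ℝ × ℝ)} (hC : C.Countable) (hCT : ∀ p ∈ C, p.1 ∈ Icc 0 T) :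
    (P.withDensity fun ω => ENNReal.ofReal (Real.exp ((ν - σ ^ 2 / 2) * T - Z T ω)))
      (constraintEvent Z C) = P (constraintEvent Z' C) := by
  have := hC.to_subtype
  rw [constraintEvent_eq_preimage, constraintEvent_eq_preimage,
    ← Measure.map_apply (hZ.measurable_eval _) (measurableSet_forall_le _),
    ← Measure.map_apply (hZ'.measurable_eval _) (measurableSet_forall_le _),
    hZ.map_eval_withDensity hZ' hT _ (fun p : C => (hCT p.1 p.2).1) fun p : C => (hCT p.1 p.2).2]

section Barrier

variable {t : ℕ → ℝ} {n : ℕ} {I : Finset ℕ}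

lemma measureReal_barrierEvent_eq (hZ : IsBM P Z ν σ) (hZ' : IsBM P Z' ν σ) (ht0 : t 0 = 0)
    (ht : StrictMonoOn t (Iic n)) (hI : I ⊆ Finset.Icc 1 n) (x m : ℕ → ℝ) :
    P.real (barrierEvent Z t n I x m) = P.real (barrierEvent Z' t n I x m) := by
  rw [measureReal_def, measureReal_def, barrierEvent_eq_constraintEvent hZ.continuous ht hI,
    barrierEvent_eq_constraintEvent hZ'.continuous ht hI,
    hZ.measure_constraintEvent_eq hZ' (barrierConstraints_countable t n I x m)
      fun p hp => (barrierConstraints_fst_mem ht0 ht hI x m p hp).1]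

lemma setIntegral_exp_barrierEvent (hZ : IsBM P Z ν σ) (hZ' : IsBM P Z' (ν - σ ^ 2) σ)
    (ht0 : t 0 = 0) (ht : StrictMonoOn t (Iic n)) (hI : I ⊆ Finset.Icc 1 n) (x m : ℕ → ℝ) :
    ∫ ω in barrierEvent Z t n I x m, Real.exp ((ν - σ ^ 2 / 2) * t n - Z (t n) ω) ∂P
      = P.real (barrierEvent Z' t n I x m) := by
  have htn : 0 ≤ t n := (ht.apply_mem_Icc ht0 le_rfl).1
  have := hZ.isProbabilityMeasure_withDensity htn
  have hdensity : Measurable fun ω =>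
      ENNReal.ofReal (Real.exp ((ν - σ ^ 2 / 2) * t n - Z (t n) ω)) := by
    have := hZ.measurable (t n); fun_prop
  calc ∫ ω in barrierEvent Z t n I x m, Real.exp ((ν - σ ^ 2 / 2) * t n - Z (t n) ω) ∂P
      = ∫ ω in barrierEvent Z t n I x m, (1 : ℝ) ∂(P.withDensity fun ω =>
          ENNReal.ofReal (Real.exp ((ν - σ ^ 2 / 2) * t n - Z (t n) ω))) := by
        rw [setIntegral_withDensity_eq_setIntegral_toReal_smul hdensity
          (ae_of_all _ fun _ => ENNReal.ofReal_lt_top) _ (hZ.measurableSet_barrierEvent ht hI x m)]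
        simp [ENNReal.toReal_ofReal (Real.exp_pos _).le]
    _ = P.real (barrierEvent Z' t n I x m) := by
      rw [setIntegral_const, smul_eq_mul, mul_one, measureReal_def, measureReal_def,
        barrierEvent_eq_constraintEvent hZ.continuous ht hI,
        barrierEvent_eq_constraintEvent hZ'.continuous ht hI,
        hZ.withDensity_constraintEvent_eq hZ' htn (barrierConstraints_countable t n I x m)
          (barrierConstraints_fst_mem ht0 ht hI x m)]

end Barrier

end IsBM

end BrownianMotion

lemma exp_mul_max_mul_indicator {Ω : Type*} {S0 K : ℝ} (hS0 : 0 < S0) (hK : 0 < K) (a : ℝ)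
    (Y : Ω → ℝ) (A : Set Ω) (ω : Ω) :
    Real.exp a * max (S0 * Real.exp (Y ω) - K) 0 * A.indicator (fun _ => (1 : ℝ)) ω
      = (A ∩ {ω | Real.log (K / S0) ≤ Y ω}).indicator
          (fun ω => S0 * Real.exp (a + Y ω) - K * Real.exp a) ω := by
  have hiff : Real.log (K / S0) ≤ Y ω ↔ K ≤ S0 * Real.exp (Y ω) := by
    rw [← Real.exp_le_exp, Real.exp_log (div_pos hK hS0), div_le_iff₀' hS0]
  by_cases hA : ω ∈ A
  · by_cases hY : Real.log (K / S0) ≤ Y ω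
    · rw [indicator_of_mem hA, indicator_of_mem (show ω ∈ A ∩ _ from ⟨hA, hY⟩),
        max_eq_left (sub_nonneg.mpr (hiff.mp hY)), Real.exp_add]
      ring
    · rw [indicator_of_mem hA, indicator_of_notMem fun h => hY h.2,
        max_eq_right (by linarith [hiff.not.mp hY])]
      ring
  · rw [indicator_of_notMem hA, indicator_of_notMem fun h => hA h.1, mul_zero]

theorem down_and_out_call_price_general
    {Ω : Type*} [MeasurableSpace Ω] (P : Measure Ω) [IsProbabilityMeasure P]
    (r σ : ℝ)
    (X Y₁ Y₂ : ℝ → Ω → ℝ)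
    (hX : IsBM P X (r - σ ^ 2 / 2) σ)
    (hY₁ : IsBM P Y₁ (-r - σ ^ 2 / 2) σ) (hY₂ : IsBM P Y₂ (-r + σ ^ 2 / 2) σ)
    (n : ℕ) (hn : 0 < n) (T : ℝ) (t : ℕ → ℝ) (ht0 : t 0 = 0) (htn : t n = T)
    (htmono : ∀ i < n, t i < t (i + 1))
    (I : Finset ℕ) (hI : I ⊆ Finset.Icc 1 n)
    (S0 K : ℝ) (hS0 : 0 < S0) (hK : 0 < K)
    (x m : ℕ → ℝ) (k : ℝ)
    (hk : k = Real.log (K / S0)) :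
    ∫ ω, Real.exp (-r * T) * max (S0 * Real.exp (X (t n) ω) - K) 0 *
        Set.indicator {ω' | (∀ i ∈ Finset.Icc 1 n, x i ≤ X (t i) ω') ∧
          ∀ i ∈ I, m i ≤ runMin X (t (i - 1)) (t i) ω'} (fun _ => (1 : ℝ)) ω ∂P =
      S0 * PAu P Y₁ t n I
          (Function.update (fun i => -x i) n (min (-x n) (-k))) (fun i => -m i) -
        K * Real.exp (-r * T) * PAu P Y₂ t n I
          (Function.update (fun i => -x i) n (min (-x n) (-k))) (fun i => -m i) := by
  subst htn hk
  have ht : StrictMonoOn t (Iic n) :=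
    strictMonoOn_Iic_of_lt_succ fun i hi => by simpa using htmono i hi
  have hZ : IsBM P (fun τ ω => -X τ ω) (-r + σ ^ 2 / 2) σ := by convert hX.neg using 1; ring
  have hY₁' : IsBM P Y₁ (-r + σ ^ 2 / 2 - σ ^ 2) σ := by convert hY₁ using 1; ring
  have hexp : ∀ ω, -r * t n + X (t n) ω = (-r + σ ^ 2 / 2 - σ ^ 2 / 2) * t n - -X (t n) ω :=
    fun ω => by ring
  simp_rw [exp_mul_max_mul_indicator hS0 hK,
    downEvent_inter_eq_barrierEvent_neg hn, hexp]
  rw [integral_indicator (hZ.measurableSet_barrierEvent ht hI _ _),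
    integral_sub ((hZ.integrable_exp (ht.apply_mem_Icc ht0 le_rfl).1).integrableOn.const_mul S0)
      (integrableOn_const (measure_ne_top _ _)),
    integral_const_mul, hZ.setIntegral_exp_barrierEvent hY₁' ht0 ht hI, setIntegral_const,
    hZ.measureReal_barrierEvent_eq hY₂ ht0 ht hI, smul_eq_mul]
  rw [PAu_eq_measureReal_barrierEvent, PAu_eq_measureReal_barrierEvent]
  ring

/-- **Down-and-out icicled multi-step barrier call price.** In the Black–Scholes model
`S(t) = S(0) e^{X(t)}` with risk-neutral drift `r - σ²/2`,
`e^{-rT} E[(S(T) - K)⁺ I(A_d)]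
  = S(0) PA_u(-r - σ²/2; -x₁,…,-x_{n-1}, (-xₙ) ∧ (-k); -m)
  - K e^{-rT} PA_u(-r + σ²/2; -x₁,…,-x_{n-1}, (-xₙ) ∧ (-k); -m)`. -/
theorem down_and_out_call_price
    {Ω : Type*} [MeasurableSpace Ω] (P : Measure Ω) [IsProbabilityMeasure P]
    (r σ : ℝ) (hσ : 0 < σ)
    (X Y₁ Y₂ : ℝ → Ω → ℝ)
    (hX : IsBM P X (r - σ ^ 2 / 2) σ)
    (hY₁ : IsBM P Y₁ (-r - σ ^ 2 / 2) σ) (hY₂ : IsBM P Y₂ (-r + σ ^ 2 / 2) σ)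
    (n : ℕ) (hn : 0 < n) (T : ℝ) (t : ℕ → ℝ) (ht0 : t 0 = 0) (htn : t n = T)
    (htmono : ∀ i < n, t i < t (i + 1))
    (I : Finset ℕ) (hI : I ⊆ Finset.Icc 1 n) (hIne : I.Nonempty)
    (S0 K : ℝ) (hS0 : 0 < S0) (hK : 0 < K)
    (L B : ℕ → ℝ) (hL : ∀ i ∈ Finset.Icc 1 n, 0 < L i) (hB : ∀ i ∈ I, 0 < B i)
    (x m : ℕ → ℝ) (k : ℝ)
    (hx : ∀ i, x i = Real.log (L i / S0)) (hm : ∀ i, m i = Real.log (B i / S0))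
    (hk : k = Real.log (K / S0))
    (hmmin : m (I.min' hIne) ≤ 0)
    (hxm : ∀ i ∈ I, m i ≤ x (i - 1) ∧ m i ≤ x i) :
    ∫ ω, Real.exp (-r * T) * max (S0 * Real.exp (X (t n) ω) - K) 0 *
        Set.indicator {ω' | (∀ i ∈ Finset.Icc 1 n, x i ≤ X (t i) ω') ∧
          ∀ i ∈ I, m i ≤ runMin X (t (i - 1)) (t i) ω'} (fun _ => (1 : ℝ)) ω ∂P =
      S0 * PAu P Y₁ t n I
          (Function.update (fun i => -x i) n (min (-x n) (-k))) (fun i => -m i) -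
        K * Real.exp (-r * T) * PAu P Y₂ t n I
          (Function.update (fun i => -x i) n (min (-x n) (-k))) (fun i => -m i) :=
  down_and_out_call_price_general P r σ X Y₁ Y₂ hX hY₁ hY₂ n hn T t ht0 htn htmono I hI S0 K hS0 hK
    x m k hk
end
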